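/- Let d ≥ 2, 0 < ε < (1/(d-1) − 1/d)/2, define n₀ = n, n_{i+1} = ⌈n_i^{1-ε}⌉, t_i = n/n_i, and let ℓ be minimal with n_ℓ ≤ 2. Then ∑_{i=0}^{ℓ-1} (t_{i+1}/t_i) · t_i^{1-1/d} · n_i^{1−1/(d−1)+ε} = O(n^{1−1/d}). -/

import Mathlib

/-!
Write `p = 1 - 1/d`, `q = 1 - 1/(d-1) + ε` and `γ = 1/(d-1) - 1/d - 2ε > 0`. Since
`n_{i+1} ≥ n_i^{1-ε}`, the `i`-th term is at most `n^p · n_i^{-γ}`, so it suffices to bound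
`∑ n_i^{-γ}` independently of `n`. The sequence `n_i` decreases strictly while it exceeds `2`,
and it at least halves while `n_i ≥ 4^{1/ε}`; so at most `4^{1/ε}` terms are small and the
remaining ones are dominated by a geometric series of ratio `2^{-γ}`. Both bounds are obtained at
once by telescoping a single potential.
-/

open Finset Real

lemma ceil_rpow_one_sub_le {ε : ℝ} (hε : 0 ≤ ε) {x : ℕ} (hx : 1 ≤ x) :
    ⌈(x : ℝ) ^ (1 - ε)⌉₊ ≤ x := by
  rw [Nat.ceil_le]
  calc (x : ℝ) ^ (1 - ε) ≤ (x : ℝ) ^ (1 : ℝ) :=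
        rpow_le_rpow_of_exponent_le (by exact_mod_cast hx) (by linarith)
    _ = x := rpow_one _

lemma two_mul_ceil_rpow_one_sub_le {ε x : ℝ} (hε0 : 0 < ε) (hε1 : ε ≤ 1)
    (hx : (4 : ℝ) ^ (1 / ε) ≤ x) : 2 * (⌈x ^ (1 - ε)⌉₊ : ℝ) ≤ x := by
  have hx1 : 1 ≤ x := le_trans (one_le_rpow (by norm_num) (by positivity)) hx
  have hx0 : 0 < x := by linarith
  have hpow_ge_one : 1 ≤ x ^ (1 - ε) := one_le_rpow hx1 (by linarith)
  have hceil : (⌈x ^ (1 - ε)⌉₊ : ℝ) < x ^ (1 - ε) + 1 :=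
    Nat.ceil_lt_add_one (by positivity)
  have hfour : 4 ≤ x ^ ε :=
    calc (4 : ℝ) = ((4 : ℝ) ^ (1 / ε)) ^ ε := by
          rw [← rpow_mul (by norm_num), one_div_mul_cancel hε0.ne', rpow_one]
      _ ≤ x ^ ε := rpow_le_rpow (by positivity) hx hε0.le
  have hsplit : x = x ^ ε * x ^ (1 - ε) := by
    rw [← rpow_add hx0, add_sub_cancel, rpow_one]
  nlinarith

/-- `min x M` pays for the steps below `M`, which lower `x` by at least `1`; the second
summand pays for the halving steps above `M`, since `y ≤ x / 2` gives
`y^{-γ} - x^{-γ} ≥ (2^γ - 1) x^{-γ}`. -/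
noncomputable def dyadicPotential (M γ x : ℝ) : ℝ :=
  min x M - x ^ (-γ) / (2 ^ γ - 1)

lemma rpow_neg_le_dyadicPotential_sub {M γ x y : ℝ} (hγ : 0 < γ) (hy : 1 ≤ y)
    (hyx : y + 1 ≤ x) (hhalf : M ≤ x → 2 * y ≤ x) :
    x ^ (-γ) ≤ dyadicPotential M γ x - dyadicPotential M γ y := by
  have hy0 : 0 < y := by linarith
  have hc : 0 < (2 : ℝ) ^ γ - 1 := by
    linarith [one_lt_rpow (by norm_num : (1 : ℝ) < 2) hγ]
  have hanti : x ^ (-γ) ≤ y ^ (-γ) := rpow_le_rpow_of_nonpos hy0 (by linarith) (by linarith)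
  unfold dyadicPotential
  rcases le_total x M with hxM | hMx
  · have hmin : min x M - min y M = x - y := by
      rw [min_eq_left hxM, min_eq_left (by linarith)]
    have hle_one : x ^ (-γ) ≤ 1 := rpow_le_one_of_one_le_of_nonpos (by linarith) (by linarith)
    have : 0 ≤ (y ^ (-γ) - x ^ (-γ)) / (2 ^ γ - 1) := div_nonneg (by linarith) hc.le
    rw [sub_div] at this
    linarith
  · have hmin : min y M ≤ min x M := min_le_min_right M (by linarith)
    have hgeom : (2 : ℝ) ^ γ * x ^ (-γ) ≤ y ^ (-γ) :=
      calc (2 : ℝ) ^ γ * x ^ (-γ) = (x / 2) ^ (-γ) := by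
            rw [div_rpow (by linarith) (by norm_num), rpow_neg (by norm_num : (0 : ℝ) ≤ 2),
              div_inv_eq_mul, mul_comm]
        _ ≤ y ^ (-γ) := rpow_le_rpow_of_nonpos hy0 (by linarith [hhalf hMx]) (by linarith)
    have : x ^ (-γ) ≤ (y ^ (-γ) - x ^ (-γ)) / (2 ^ γ - 1) := by
      rw [le_div_iff₀ hc]; linarith
    rw [sub_div] at this
    linarith

lemma sum_rpow_neg_le_of_antitone_of_halving {a : ℕ → ℝ} {ℓ : ℕ} {M γ : ℝ}
    (hM : 0 ≤ M) (hγ : 0 < γ) (hone : ∀ i ≤ ℓ, 1 ≤ a i)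
    (hstep : ∀ i < ℓ, a (i + 1) + 1 ≤ a i)
    (hhalf : ∀ i < ℓ, M ≤ a i → 2 * a (i + 1) ≤ a i) :
    ∑ i ∈ range ℓ, a i ^ (-γ) ≤ M + (2 ^ γ - 1)⁻¹ := by
  have hc : 0 < (2 : ℝ) ^ γ - 1 := by
    linarith [one_lt_rpow (by norm_num : (1 : ℝ) < 2) hγ]
  have htelescope : ∑ i ∈ range ℓ, a i ^ (-γ)
      ≤ dyadicPotential M γ (a 0) - dyadicPotential M γ (a ℓ) := by
    rw [← sum_range_sub' (fun i ↦ dyadicPotential M γ (a i))]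
    refine sum_le_sum fun i hi ↦ ?_
    have hi : i < ℓ := mem_range.mp hi
    exact rpow_neg_le_dyadicPotential_sub hγ (hone (i + 1) hi) (hstep i hi) (hhalf i hi)
  have hfirst : dyadicPotential M γ (a 0) ≤ M := by
    have : 0 ≤ a 0 ^ (-γ) / (2 ^ γ - 1) :=
      div_nonneg (rpow_nonneg (by linarith [hone 0 (Nat.zero_le ℓ)]) _) hc.le
    unfold dyadicPotential; linarith [min_le_right (a 0) M]
  have hlast : -(2 ^ γ - 1)⁻¹ ≤ dyadicPotential M γ (a ℓ) := by
    have hℓ := hone ℓ le_rfl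
    have : a ℓ ^ (-γ) / (2 ^ γ - 1) ≤ (2 ^ γ - 1)⁻¹ := by
      rw [div_eq_mul_inv]
      exact mul_le_of_le_one_left (inv_nonneg.mpr hc.le)
        (rpow_le_one_of_one_le_of_nonpos hℓ (by linarith))
    unfold dyadicPotential; linarith [le_min (by linarith : 0 ≤ a ℓ) hM]
  linarith

lemma eq_of_succ_eq_of_recurrence {g f : ℕ → ℕ} (hrec : ∀ i, f (i + 1) = g (f i)) {j : ℕ}
    (hj : f (j + 1) = f j) (k : ℕ) : f (j + k) = f j := by
  induction k with
  | zero => rfl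
  | succ k ih => rw [← add_assoc, hrec, ih, ← hrec, hj]

section CeilRpowSequence

variable {ε : ℝ} {f : ℕ → ℕ} {ℓ : ℕ}

lemma one_le_of_ceil_rpow_recurrence (hrec : ∀ i, f (i + 1) = ⌈(f i : ℝ) ^ (1 - ε)⌉₊)
    (hf0 : 1 ≤ f 0) (hbig : ∀ j < ℓ, 2 < f j) : ∀ i ≤ ℓ, 1 ≤ f i
  | 0, _ => hf0
  | j + 1, hj => by
    rw [hrec, Nat.one_le_iff_ne_zero, ← Nat.pos_iff_ne_zero, Nat.ceil_pos]
    have : 0 < f j := by linarith [hbig j (by omega)]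
    positivity

/-- Strictness comes from the end condition: a repeated value would be a fixed point of the
recursion, so the sequence could never drop to `2`. -/
lemma succ_lt_of_ceil_rpow_recurrence (hε : 0 ≤ ε)
    (hrec : ∀ i, f (i + 1) = ⌈(f i : ℝ) ^ (1 - ε)⌉₊) (hℓ : f ℓ ≤ 2)
    (hbig : ∀ j < ℓ, 2 < f j) {i : ℕ} (hi : i < ℓ) : f (i + 1) < f i := by
  have hle : f (i + 1) ≤ f i :=
    (hrec i).trans_le (ceil_rpow_one_sub_le hε (by linarith [hbig i hi]))
  refine lt_of_le_of_ne hle fun heq ↦ ?_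
  have hconst :=
    eq_of_succ_eq_of_recurrence (g := fun x ↦ ⌈(x : ℝ) ^ (1 - ε)⌉₊) hrec heq (ℓ - i)
  rw [Nat.add_sub_cancel' hi.le] at hconst
  linarith [hbig i hi]

lemma sum_rpow_neg_le_of_ceil_rpow_recurrence {γ : ℝ} (hε0 : 0 < ε) (hε1 : ε ≤ 1)
    (hγ : 0 < γ) (hrec : ∀ i, f (i + 1) = ⌈(f i : ℝ) ^ (1 - ε)⌉₊) (hf0 : 1 ≤ f 0)
    (hℓ : f ℓ ≤ 2) (hbig : ∀ j < ℓ, 2 < f j) :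
    ∑ i ∈ range ℓ, (f i : ℝ) ^ (-γ) ≤ (4 : ℝ) ^ (1 / ε) + (2 ^ γ - 1)⁻¹ := by
  refine sum_rpow_neg_le_of_antitone_of_halving (by positivity) hγ
    (fun i hi ↦ by exact_mod_cast one_le_of_ceil_rpow_recurrence hrec hf0 hbig i hi)
    (fun i hi ↦ by exact_mod_cast succ_lt_of_ceil_rpow_recurrence hε0.le hrec hℓ hbig hi)
    (fun i _ hM ↦ ?_)
  rw [hrec]
  exact two_mul_ceil_rpow_one_sub_le hε0 hε1 hM

end CeilRpowSequence

lemma div_div_mul_rpow_mul_rpow_le {A a b s p q : ℝ} (hA : 0 < A) (ha : 0 < a)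
    (hab : a ^ s ≤ b) :
    (A / b) / (A / a) * (A / a) ^ p * a ^ q ≤ A ^ p * a ^ (1 + q - p - s) := by
  have hb : 0 < b := (rpow_pos_of_pos ha s).trans_le hab
  have hlhs : (A / b) / (A / a) * (A / a) ^ p * a ^ q = A ^ p * (a ^ (1 + q - p) / b) := by
    rw [div_rpow hA.le ha.le, rpow_sub ha, rpow_add ha, rpow_one]
    field_simp
  rw [hlhs, rpow_sub ha (1 + q - p) s]
  gcongr

theorem stmt_11 (d : ℕ) (hd : 2 ≤ d) (ε : ℝ) (hε0 : 0 < ε)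
    (hε : ε < (1 / ((d : ℝ) - 1) - 1 / d) / 2) :
    ∃ C : ℝ, 0 < C ∧ ∀ n : ℕ, 2 ≤ n → ∀ f : ℕ → ℕ, f 0 = n →
      (∀ i, f (i + 1) = ⌈(f i : ℝ) ^ (1 - ε)⌉₊) →
      ∀ ℓ : ℕ, f ℓ ≤ 2 → (∀ j < ℓ, 2 < f j) →
        ∑ i ∈ Finset.range ℓ,
            (((n : ℝ) / (f (i + 1) : ℝ)) / ((n : ℝ) / (f i : ℝ)))
              * ((n : ℝ) / (f i : ℝ)) ^ (1 - 1 / (d : ℝ))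
              * (f i : ℝ) ^ (1 - 1 / ((d : ℝ) - 1) + ε)
          ≤ C * (n : ℝ) ^ (1 - 1 / (d : ℝ)) := by
  have hd' : (2 : ℝ) ≤ d := by exact_mod_cast hd
  have hε1 : ε ≤ 1 := by
    have : 1 / ((d : ℝ) - 1) ≤ 1 := by rw [div_le_one (by linarith)]; linarith
    have : 0 < 1 / (d : ℝ) := by positivity
    linarith
  set γ : ℝ := 1 / ((d : ℝ) - 1) - 1 / d - 2 * ε
  have hγ : 0 < γ := by linarith
  have hc : 0 < (2 : ℝ) ^ γ - 1 := by
    linarith [one_lt_rpow (by norm_num : (1 : ℝ) < 2) hγ]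
  refine ⟨(4 : ℝ) ^ (1 / ε) + (2 ^ γ - 1)⁻¹, by positivity, ?_⟩
  intro n hn f hf0 hrec ℓ hℓ hbig
  have hn0 : (0 : ℝ) < n := by exact_mod_cast (by omega : 0 < n)
  calc _ ≤ ∑ i ∈ range ℓ, (n : ℝ) ^ (1 - 1 / (d : ℝ)) * (f i : ℝ) ^ (-γ) := by
        refine sum_le_sum fun i hi ↦ ?_
        have hfi : (0 : ℝ) < f i := by exact_mod_cast (by linarith [hbig i (mem_range.mp hi)])
        have hab : (f i : ℝ) ^ (1 - ε) ≤ f (i + 1) := by rw [hrec]; exact Nat.le_ceil _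
        rw [show -γ = 1 + (1 - 1 / ((d : ℝ) - 1) + ε) - (1 - 1 / (d : ℝ)) - (1 - ε) by ring]
        exact div_div_mul_rpow_mul_rpow_le hn0 hfi hab
    _ = (n : ℝ) ^ (1 - 1 / (d : ℝ)) * ∑ i ∈ range ℓ, (f i : ℝ) ^ (-γ) :=
        (mul_sum ..).symm
    _ ≤ _ := by
        rw [mul_comm]
        gcongr
        exact sum_rpow_neg_le_of_ceil_rpow_recurrence hε0 hε1 hγ hrec (by omega) hℓ hbig
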